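/- arXiv:0903.4997 — 3 statements merged into one kernel-verified Lean document; each statement's English description precedes it below -/
import Mathlib

section
/- Wu's formula: let e_n = x_1 x_2 ⋯ x_n be the top elementary symmetric polynomial in F_q[x_1,…,x_n]. Then for all i with 0 ≤ i ≤ n, P^i(e_n) = e_n · e_i(x_1^{q−1}, …, x_n^{q−1}), where e_i denotes the i-th elementary symmetric polynomial. -/
/-- The total Steenrod power `P(ξ) : F_q[V] → F_q[V][ξ]`, the `F_q`-algebra homomorphism
determined by `P(ξ)(x_i) = x_i + x_i^q ξ` on the variables (linear forms). -/
noncomputable def totalP (F : Type) [Field F] [Fintype F] (σ : Type) :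
    MvPolynomial σ F →ₐ[F] Polynomial (MvPolynomial σ F) :=
  MvPolynomial.aeval fun i =>
    Polynomial.C (MvPolynomial.X i) +
      Polynomial.C (MvPolynomial.X i ^ Fintype.card F) * Polynomial.X

/-- The Steenrod operation `P^i`, the `i`-th homogeneous component of the total
Steenrod power: `P(ξ)(f) = Σ_i P^i(f) ξ^i`. -/
noncomputable def Pop (F : Type) [Field F] [Fintype F] (σ : Type) (i : ℕ)
    (f : MvPolynomial σ F) : MvPolynomial σ F :=
  (totalP F σ f).coeff i

/-!
Since `P(ξ)` is multiplicative, `P(ξ)(x_1 ⋯ x_n) = ∏_j (x_j + x_j^q ξ)`. Expanding the product, the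
coefficient of `ξ^i` is the sum over `i`-subsets `t` of `∏_{j ∈ t} x_j^q ∏_{j ∉ t} x_j`, and pulling
out `x_1 ⋯ x_n` leaves `∏_{j ∈ t} x_j^{q-1}`, the monomials of `e_i(x_1^{q-1}, …, x_n^{q-1})`.
-/

namespace Polynomial

theorem coeff_prod_C_add_C_mul_X {R ι : Type*} [CommSemiring R] [DecidableEq ι]
    (s : Finset ι) (a b : ι → R) (k : ℕ) :
    (∏ j ∈ s, (C (a j) + C (b j) * X)).coeff k =
      ∑ t ∈ s.powersetCard k, (∏ j ∈ t, b j) * ∏ j ∈ s \ t, a j := by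
  simp_rw [add_comm (C _), Finset.prod_add, finsetSum_coeff, Finset.prod_mul_distrib,
    Finset.prod_const, ← map_prod, mul_right_comm _ (X ^ _), ← C_mul, coeff_C_mul_X_pow,
    Finset.powersetCard_eq_filter, Finset.sum_filter, eq_comm]

end Polynomial

section
open MvPolynomial

theorem totalP_X (F : Type) [Field F] [Fintype F] {σ : Type} (j : σ) :
    totalP F σ (X j) =
      Polynomial.C (X j) + Polynomial.C (X j ^ Fintype.card F) * Polynomial.X :=
  aeval_X _ j

theorem Pop_prod_X (F : Type) [Field F] [Fintype F] {σ : Type} [DecidableEq σ]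
    (s : Finset σ) (i : ℕ) :
    Pop F σ i (∏ j ∈ s, X j) =
      ∑ t ∈ s.powersetCard i, (∏ j ∈ t, X j ^ Fintype.card F) * ∏ j ∈ s \ t, X j := by
  rw [Pop, map_prod]
  simp_rw [totalP_X]
  exact Polynomial.coeff_prod_C_add_C_mul_X s _ _ i

end

theorem Finset.prod_pow_mul_prod_sdiff {R ι : Type*} [CommMonoid R] [DecidableEq ι]
    {s t : Finset ι} (ht : t ⊆ s) (f : ι → R) {m : ℕ} (hm : 1 ≤ m) :
    (∏ j ∈ t, f j ^ m) * ∏ j ∈ s \ t, f j = (∏ j ∈ s, f j) * ∏ j ∈ t, f j ^ (m - 1) := by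
  have hpow : ∀ j, f j ^ m = f j ^ (m - 1) * f j := fun j => by
    rw [← pow_succ, Nat.sub_add_cancel hm]
  simp_rw [hpow, Finset.prod_mul_distrib]
  rw [mul_assoc, mul_comm (∏ j ∈ t, f j), Finset.prod_sdiff ht, mul_comm]

open MvPolynomial in
theorem stmt9_general (F : Type) [Field F] [Fintype F] (n i : ℕ) :
    Pop F (Fin n) i (∏ j, X j) =
      (∏ j, X j) *
        aeval (fun j : Fin n => X j ^ (Fintype.card F - 1)) (esymm (Fin n) F i) := by
  rw [Pop_prod_X, aeval_esymm_eq_multiset_esymm, Finset.esymm_map_val, Finset.mul_sum]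
  exact Finset.sum_congr rfl fun t ht =>
    Finset.prod_pow_mul_prod_sdiff (Finset.mem_powersetCard.1 ht).1 _ Fintype.card_pos

open MvPolynomial in
/-- Wu's formula: for `e_n = x_1 ⋯ x_n` and `0 ≤ i ≤ n`,
`P^i(e_n) = e_n · e_i(x_1^{q-1}, …, x_n^{q-1})`. -/
theorem stmt9 (F : Type) [Field F] [Fintype F] (n i : ℕ) (hi : i ≤ n) :
    Pop F (Fin n) i (∏ j, X j) =
      (∏ j, X j) *
        aeval (fun j : Fin n => X j ^ (Fintype.card F - 1)) (esymm (Fin n) F i) :=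
  stmt9_general F n i
end

section
/- The Bullett–Macdonald identity holds: with u = (1−t)^{q−1} and s = tu in F_q[V][t] (extending P(ξ) to polynomials in t by letting it fix t), one has P(s) ∘ P(1) = P(u) ∘ P(t^q) as algebra homomorphisms F_q[V] → F_q[V][t]; in particular, for every linear form ℓ, P(s)(ℓ + ℓ^q) = P(u)(ℓ + ℓ^q t^q). -/
/-- The total Steenrod power evaluated at `ξ = a ∈ F_q[V][t]`:
`P(a)(f)` is `P(ξ)(f)` with `a` substituted for `ξ`. -/
noncomputable def PAt (F : Type) [Field F] [Fintype F] (σ : Type)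
    (a : Polynomial (MvPolynomial σ F)) :
    MvPolynomial σ F →+* Polynomial (MvPolynomial σ F) :=
  (Polynomial.eval₂RingHom (Polynomial.C :
      MvPolynomial σ F →+* Polynomial (MvPolynomial σ F)) a).comp (totalP F σ).toRingHom

/-- `P(a)` extended coefficientwise to `F_q[V][t] → F_q[V][t]`, fixing `t`. -/
noncomputable def PAtExt (F : Type) [Field F] [Fintype F] (σ : Type)
    (a : Polynomial (MvPolynomial σ F)) :
    Polynomial (MvPolynomial σ F) →+* Polynomial (MvPolynomial σ F) :=
  Polynomial.eval₂RingHom (PAt F σ a) Polynomial.X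

open Polynomial MvPolynomial Finsupp in
lemma deg_one_single {σ : Type} {d : σ →₀ ℕ} (hd : Finsupp.degree d = 1) :
    ∃ i, d = Finsupp.single i 1 := by
  classical
  have hne : d ≠ 0 := by rintro rfl; simp [map_zero] at hd
  obtain ⟨i, hi⟩ := Finsupp.ne_iff.mp hne
  simp only [Finsupp.coe_zero, Pi.zero_apply] at hi
  refine ⟨i, ?_⟩
  have hdi : d i = 1 := le_antisymm (hd ▸ Finsupp.le_degree i d) (Nat.one_le_iff_ne_zero.mpr hi)
  ext j
  rcases eq_or_ne j i with rfl | hj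
  · simpa using hdi
  · rw [Finsupp.single_eq_of_ne' (Ne.symm hj)]
    by_contra hne'
    have hji : ({j, i} : Finset σ) ⊆ d.support := by
      intro k hk
      simp only [Finset.mem_insert, Finset.mem_singleton] at hk
      rcases hk with rfl | rfl <;> simp [Finsupp.mem_support_iff, hne', hi]
    have : d j + d i ≤ Finsupp.degree d := by
      rw [Finsupp.degree, ← Finset.sum_pair hj]
      exact Finset.sum_le_sum_of_subset hji
    omega

open MvPolynomial in
lemma totalP_linear {F : Type} [Field F] [Fintype F] {σ : Type}
    {ℓ : MvPolynomial σ F} (hℓ : ℓ.IsHomogeneous 1) :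
    totalP F σ ℓ = Polynomial.C ℓ + Polynomial.C (ℓ ^ Fintype.card F) * Polynomial.X := by
  haveI : Fact (Nat.Prime (ringChar F)) := ⟨CharP.char_is_prime F _⟩
  obtain ⟨k, hprime, hcard⟩ := FiniteField.card F (ringChar F)
  have key : ∀ d ∈ ℓ.support, totalP F σ (monomial d (coeff d ℓ)) =
      Polynomial.C (monomial d (coeff d ℓ)) +
      Polynomial.C ((monomial d (coeff d ℓ)) ^ Fintype.card F) * Polynomial.X := by
    intro d hd
    have hdeg : Finsupp.degree d = 1 := by
      rw [Finsupp.degree_eq_weight_one]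
      exact hℓ (mem_support_iff.mp hd)
    obtain ⟨i, rfl⟩ := deg_one_single hdeg
    set c := coeff (Finsupp.single i 1) ℓ
    rw [← MvPolynomial.C_mul_X_eq_monomial]
    have hc : c ^ Fintype.card F = c := FiniteField.pow_card c
    simp only [map_mul, totalP, MvPolynomial.aeval_C, MvPolynomial.aeval_X, mul_pow,
      ← map_pow, hc, Polynomial.algebraMap_apply, MvPolynomial.algebraMap_eq]
    ring
  conv_lhs => rw [ℓ.as_sum, map_sum]
  rw [Finset.sum_congr rfl key]
  have : ℓ ^ Fintype.card F = ∑ d ∈ ℓ.support, (monomial d (coeff d ℓ)) ^ Fintype.card F := by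
    conv_lhs => rw [ℓ.as_sum]
    rw [hcard, sum_pow_char_pow]
  rw [Finset.sum_add_distrib, ← Finset.sum_mul, ← map_sum, ← map_sum, ← this, ← ℓ.as_sum]

lemma PAt_linear {F : Type} [Field F] [Fintype F] {σ : Type}
    (a : Polynomial (MvPolynomial σ F)) {ℓ : MvPolynomial σ F} (hℓ : ℓ.IsHomogeneous 1) :
    PAt F σ a ℓ = Polynomial.C ℓ + Polynomial.C (ℓ ^ Fintype.card F) * a := by
  simp only [PAt, RingHom.comp_apply, Polynomial.coe_eval₂RingHom,
    AlgHom.toRingHom_eq_coe, RingHom.coe_coe]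
  rw [totalP_linear hℓ, Polynomial.eval₂_add, Polynomial.eval₂_mul, Polynomial.eval₂_C,
    Polynomial.eval₂_C, Polynomial.eval₂_X]

lemma main_lemma {F : Type} [Field F] [Fintype F] {σ : Type}
    {ℓ : MvPolynomial σ F} (hℓ : ℓ.IsHomogeneous 1) :
    PAt F σ ((Polynomial.X : Polynomial (MvPolynomial σ F)) *
        (1 - Polynomial.X) ^ (Fintype.card F - 1)) (ℓ + ℓ ^ Fintype.card F) =
    PAtExt F σ ((1 - Polynomial.X) ^ (Fintype.card F - 1))
        (Polynomial.C ℓ + Polynomial.C (ℓ ^ Fintype.card F) *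
          Polynomial.X ^ Fintype.card F) := by
  haveI : Fact (Nat.Prime (ringChar F)) := ⟨CharP.char_is_prime F _⟩
  obtain ⟨k, hprime, hcard⟩ := FiniteField.card F (ringChar F)
  set q := Fintype.card F with hq
  set t : Polynomial (MvPolynomial σ F) := Polynomial.X with ht
  set A : Polynomial (MvPolynomial σ F) := Polynomial.C ℓ with hA
  set B : Polynomial (MvPolynomial σ F) := Polynomial.C (ℓ ^ q) with hB
  set u : Polynomial (MvPolynomial σ F) := (1 - t) ^ (q - 1) with hu
  have hLHS : PAt F σ (t * u) (ℓ + ℓ ^ q) =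
      (A + B * (t * u)) + (A + B * (t * u)) ^ q := by
    rw [map_add, map_pow, PAt_linear _ hℓ]
  have hRHS : PAtExt F σ u (A + B * t ^ q) =
      (A + B * u) + (A + B * u) ^ q * t ^ q := by
    simp only [PAtExt, Polynomial.coe_eval₂RingHom, hA, hB, ht, map_add, map_mul, map_pow,
      Polynomial.eval₂_C, Polynomial.eval₂_X]
    rw [PAt_linear _ hℓ]
    simp only [map_pow]
    rfl
  rw [hLHS, hRHS]
  have hfr : ∀ P Q : Polynomial (MvPolynomial σ F), (P + Q) ^ q = P ^ q + Q ^ q := by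
    intro P Q; rw [hcard]; exact add_pow_char_pow ..
  have hCq : A ^ q = B := by rw [hA, hB, map_pow]
  have hone : (1 - t) ^ q = 1 - t ^ q := by
    rw [hcard, sub_pow_char_pow, one_pow]
  have hkey : u * (1 - t) = 1 - t ^ q := by
    rw [hu, ← pow_succ, ← hone]
    congr 1
    have : 0 < q := Fintype.card_pos
    omega
  rw [hfr, hfr, mul_pow, mul_pow, hCq]
  linear_combination (-B) * hkey


open Polynomial in
/-- the Bullett–Macdonald identity: with `u = (1-t)^{q-1}` and `s = tu`,
`P(s) ∘ P(1) = P(u) ∘ P(t^q)` as maps `F_q[V] → F_q[V][t]`; and explicitly on a linear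
form `ℓ`, `P(s)(ℓ + ℓ^q) = P(u)(ℓ + ℓ^q t^q)`. -/
theorem stmt11 (F : Type) [Field F] [Fintype F] (n : ℕ) :
    (∀ f : MvPolynomial (Fin n) F,
      PAtExt F (Fin n) ((X : Polynomial (MvPolynomial (Fin n) F)) *
          (1 - X) ^ (Fintype.card F - 1))
        (PAt F (Fin n) 1 f) =
      PAtExt F (Fin n) ((1 - X) ^ (Fintype.card F - 1))
        (PAt F (Fin n) ((X : Polynomial (MvPolynomial (Fin n) F)) ^ Fintype.card F) f)) ∧
    (∀ ℓ : MvPolynomial (Fin n) F, ℓ.IsHomogeneous 1 →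
      PAt F (Fin n) ((X : Polynomial (MvPolynomial (Fin n) F)) *
          (1 - X) ^ (Fintype.card F - 1)) (ℓ + ℓ ^ Fintype.card F) =
      PAtExt F (Fin n) ((1 - X) ^ (Fintype.card F - 1))
        (C ℓ + C (ℓ ^ Fintype.card F) * X ^ Fintype.card F)) := by
  have hC : ∀ (a : Polynomial (MvPolynomial (Fin n) F)) (r : F),
      PAt F (Fin n) a (MvPolynomial.C r) = Polynomial.C (MvPolynomial.C r) := by
    intro a r
    simp only [PAt, RingHom.comp_apply, Polynomial.coe_eval₂RingHom,
      AlgHom.toRingHom_eq_coe, RingHom.coe_coe]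
    rw [totalP, MvPolynomial.aeval_C, Polynomial.algebraMap_apply,
      MvPolynomial.algebraMap_eq, Polynomial.eval₂_C]
  have hExtC : ∀ (a : Polynomial (MvPolynomial (Fin n) F)) (g : MvPolynomial (Fin n) F),
      PAtExt F (Fin n) a (Polynomial.C g) = PAt F (Fin n) a g := by
    intro a g
    simp only [PAtExt, Polynomial.coe_eval₂RingHom, Polynomial.eval₂_C]
  constructor
  · intro f
    have h : (PAtExt F (Fin n) ((X : Polynomial (MvPolynomial (Fin n) F)) *
          (1 - X) ^ (Fintype.card F - 1))).comp (PAt F (Fin n) 1)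
        = (PAtExt F (Fin n) ((1 - X) ^ (Fintype.card F - 1))).comp
          (PAt F (Fin n) ((X : Polynomial (MvPolynomial (Fin n) F)) ^ Fintype.card F)) := by
      apply MvPolynomial.ringHom_ext
      · intro r
        simp only [RingHom.comp_apply, hC, hExtC]
      · intro i
        have hX : (MvPolynomial.X i : MvPolynomial (Fin n) F).IsHomogeneous 1 :=
          MvPolynomial.isHomogeneous_X F i
        simp only [RingHom.comp_apply]
        rw [PAt_linear _ hX, PAt_linear _ hX, mul_one, ← map_add, hExtC, map_add,
          map_pow]
        rw [show (PAt F (Fin n) ((X : Polynomial (MvPolynomial (Fin n) F)) *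
            (1 - X) ^ (Fintype.card F - 1))) (MvPolynomial.X i) +
            ((PAt F (Fin n) ((X : Polynomial (MvPolynomial (Fin n) F)) *
            (1 - X) ^ (Fintype.card F - 1))) (MvPolynomial.X i)) ^ Fintype.card F
            = PAt F (Fin n) ((X : Polynomial (MvPolynomial (Fin n) F)) *
            (1 - X) ^ (Fintype.card F - 1))
              (MvPolynomial.X i + MvPolynomial.X i ^ Fintype.card F) by
          rw [map_add, map_pow]]
        exact main_lemma hX
    rw [← RingHom.comp_apply, h, RingHom.comp_apply]
  · exact fun ℓ hℓ => main_lemma hℓ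
end

section
/- The assignment ξ_k(p) ↦ ξ_m(q) if k = mν and ξ_k(p) ↦ 0 otherwise extends to a surjective homomorphism of graded Hopf algebras θ_*: P_*(F_p) ⊗_{F_p} F_q → P_*(F_q), where q = p^ν; in particular it respects the coproducts ∇_*(ξ_k) = Σ_{i+j=k} ξ_i^{p^j} ⊗ ξ_j (resp. Σ ξ_i^{q^j} ⊗ ξ_j). -/
open scoped TensorProduct

/-- The (base-changed) dual Steenrod algebra: a polynomial algebra over the field on
generators `ξ_k`, `k ≥ 1`. For `P_*(F_p) ⊗_{F_p} F_q` the generator `ξ_k(p)` has degree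
`p^k − 1`; for `P_*(F_q)` the generator `ξ_m(q)` has degree `q^m − 1`. -/
abbrev DualSteenrod (K : Type) [Field K] := MvPolynomial {k : ℕ // 0 < k} K

/-- The generator `ξ_i`, with the convention `ξ_0 = 1`. -/
noncomputable def xi (K : Type) [Field K] (i : ℕ) : DualSteenrod K :=
  if h : 0 < i then MvPolynomial.X ⟨i, h⟩ else 1

/-- The coproduct `ξ_k ↦ Σ_{i+j=k} ξ_i^{r^j} ⊗ ξ_j` (with `r = p` resp. `r = q`). -/
noncomputable def Dcop (K : Type) [Field K] (r : ℕ) :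
    DualSteenrod K →ₐ[K] (DualSteenrod K ⊗[K] DualSteenrod K) :=
  MvPolynomial.aeval fun k =>
    ∑ j ∈ Finset.range (k.1 + 1),
      (((xi K (k.1 - j)) ^ (r ^ j)) ⊗ₜ[K] (xi K j) : DualSteenrod K ⊗[K] DualSteenrod K)

/-- The map `θ_* : P_*(F_p) ⊗_{F_p} F_q → P_*(F_q)`, `ξ_k(p) ↦ ξ_{k/ν}(q)` if `ν ∣ k`
and `ξ_k(p) ↦ 0` otherwise. -/
noncomputable def theta (K : Type) [Field K] (ν : ℕ) (hν : 0 < ν) :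
    DualSteenrod K →ₐ[K] DualSteenrod K :=
  MvPolynomial.aeval fun k =>
    if h : ν ∣ k.1 then
      MvPolynomial.X ⟨k.1 / ν, Nat.div_pos (Nat.le_of_dvd k.2 h) hν⟩
    else 0

lemma theta_xi (K : Type) [Field K] (ν : ℕ) (hν : 0 < ν) (i : ℕ) :
    theta K ν hν (xi K i) = if ν ∣ i then xi K (i / ν) else 0 := by
  rcases Nat.eq_zero_or_pos i with rfl | hi
  · simp [xi, theta]
  · rw [xi, dif_pos hi, theta, MvPolynomial.aeval_X]
    by_cases h : ν ∣ i
    · rw [dif_pos h, if_pos h, xi, dif_pos (Nat.div_pos (Nat.le_of_dvd hi h) hν)]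
    · rw [dif_neg h, if_neg h]

lemma pow_wh {K' : Type*} [Field K'] {σ : Type*} {w : σ → ℕ} {φ : MvPolynomial σ K'}
    {a : ℕ} (h : φ.IsWeightedHomogeneous w a) (n : ℕ) :
    (φ ^ n).IsWeightedHomogeneous w (n * a) := by
  induction n with
  | zero => simpa using MvPolynomial.isWeightedHomogeneous_one K' w
  | succ n ih =>
      have := ih.mul h
      rw [← pow_succ] at this
      convert this using 1
      ring


/-- `θ_* : P_*(F_p) ⊗_{F_p} F_q → P_*(F_q)` (with `q = p^ν`) is a
surjective homomorphism of graded Hopf algebras: it is surjective, it respects the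
coproducts, and it respects the gradings (with `ξ_k(p)` of degree `p^k − 1` and
`ξ_m(q)` of degree `q^m − 1`). -/
theorem stmt18 (p ν : ℕ) (hp : p.Prime) (hν : 0 < ν)
    (K : Type) [Field K] [Fintype K] (hcard : Fintype.card K = p ^ ν) :
    Function.Surjective (theta K ν hν) ∧
    (Algebra.TensorProduct.map (theta K ν hν) (theta K ν hν)).comp (Dcop K p) =
      (Dcop K (p ^ ν)).comp (theta K ν hν) ∧
    (∀ (f : DualSteenrod K) (d : ℕ),
      f.IsWeightedHomogeneous (fun k => p ^ k.1 - 1) d →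
      (theta K ν hν f).IsWeightedHomogeneous (fun k => (p ^ ν) ^ k.1 - 1) d) := by
  have hppos : 0 < p := hp.pos
  -- the value of theta on variables
  have hthX : ∀ (m : ℕ) (hm : 0 < m),
      theta K ν hν (MvPolynomial.X ⟨ν * m, Nat.mul_pos hν hm⟩) = MvPolynomial.X ⟨m, hm⟩ := by
    intro m hm
    rw [theta, MvPolynomial.aeval_X, dif_pos (dvd_mul_right ν m)]
    congr 1
    exact Subtype.ext (Nat.mul_div_cancel_left m hν)
  refine ⟨?_, ?_, ?_⟩
  · -- surjectivity
    intro f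
    have hmem : f ∈ (theta K ν hν).range := by
      have htop : f ∈ (⊤ : Subalgebra K (DualSteenrod K)) := trivial
      rw [← MvPolynomial.adjoin_range_X] at htop
      refine Algebra.adjoin_le ?_ htop
      rintro _ ⟨k, rfl⟩
      exact ⟨MvPolynomial.X ⟨ν * k.1, Nat.mul_pos hν k.2⟩, hthX k.1 k.2⟩
    exact hmem
  · -- coproducts
    apply MvPolynomial.algHom_ext
    intro k
    obtain ⟨kk, hk⟩ := k
    simp only [AlgHom.comp_apply]
    rw [Dcop, MvPolynomial.aeval_X, map_sum]
    by_cases hdvd : ν ∣ kk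
    · -- ν ∣ k
      obtain ⟨m, rfl⟩ := hdvd
      have hm : 0 < m := by
        rcases Nat.eq_zero_or_pos m with rfl | h
        · simp at hk
        · exact h
      rw [hthX m hm, Dcop, MvPolynomial.aeval_X]
      -- LHS sum: only multiples of ν contribute
      have hsub : (Finset.range (m + 1)).image (fun j => ν * j) ⊆
          Finset.range (ν * m + 1) := by
        intro x hx
        simp only [Finset.mem_image, Finset.mem_range] at hx ⊢
        obtain ⟨j, hj, rfl⟩ := hx
        have : j ≤ m := Nat.lt_succ_iff.mp hj
        exact Nat.lt_succ_of_le (Nat.mul_le_mul_left ν this)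
      rw [← Finset.sum_subset hsub ?zero]
      case zero =>
        intro x hx hnx
        have hxle : x ≤ ν * m := Nat.lt_succ_iff.mp (Finset.mem_range.mp hx)
        have hnd : ¬ ν ∣ x := by
          rintro ⟨j, rfl⟩
          exact hnx (Finset.mem_image.mpr ⟨j, Finset.mem_range.mpr
            (Nat.lt_succ_iff.mpr (Nat.le_of_mul_le_mul_left hxle hν)), rfl⟩)
        rw [Algebra.TensorProduct.map_tmul, theta_xi, if_neg hnd, TensorProduct.tmul_zero]
      rw [Finset.sum_image (by intro a _ b _ h; exact Nat.eq_of_mul_eq_mul_left hν h)]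
      refine Finset.sum_congr rfl ?_
      intro j hj
      have hjm : j ≤ m := Nat.lt_succ_iff.mp (Finset.mem_range.mp hj)
      rw [Algebra.TensorProduct.map_tmul, map_pow, theta_xi, theta_xi,
        if_pos (dvd_mul_right ν j),
        if_pos (Nat.dvd_sub (dvd_mul_right ν m) (dvd_mul_right ν j))]
      have e1 : (ν * m - ν * j) / ν = m - j := by
        rw [← Nat.mul_sub, Nat.mul_div_cancel_left _ hν]
      rw [e1, Nat.mul_div_cancel_left j hν, ← pow_mul]
    · -- ν ∤ k
      have h0 : theta K ν hν (MvPolynomial.X ⟨kk, hk⟩) = 0 := by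
        rw [theta, MvPolynomial.aeval_X, dif_neg hdvd]
      rw [h0, map_zero]
      rw [show ((0 : DualSteenrod K ⊗[K] DualSteenrod K)) = ∑ j ∈ Finset.range (kk + 1),
        (0 : DualSteenrod K ⊗[K] DualSteenrod K) from (Finset.sum_const_zero).symm]
      refine Finset.sum_congr rfl ?_
      intro j hj
      have hjk : j ≤ kk := Nat.lt_succ_iff.mp (Finset.mem_range.mp hj)
      rw [Algebra.TensorProduct.map_tmul, map_pow, theta_xi, theta_xi]
      by_cases hdj : ν ∣ j
      · have h1 : ¬ ν ∣ (kk - j) := by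
          intro h
          exact hdvd (by have := Nat.dvd_add h hdj; rwa [Nat.sub_add_cancel hjk] at this)
        rw [if_neg h1, zero_pow (by positivity), TensorProduct.zero_tmul]
      · rw [if_neg hdj, TensorProduct.tmul_zero]
  · -- grading
    intro f d hf
    rw [theta, MvPolynomial.aeval_def, MvPolynomial.eval₂_eq]
    rw [← MvPolynomial.mem_weightedHomogeneousSubmodule]
    refine Submodule.sum_mem _ ?_
    intro m hm
    rw [MvPolynomial.mem_weightedHomogeneousSubmodule]
    have hd : Finsupp.weight (fun k : {k : ℕ // 0 < k} => p ^ k.1 - 1) m = d :=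
      hf (MvPolynomial.mem_support_iff.mp hm)
    rw [Finsupp.weight_apply, Finsupp.sum] at hd
    have : (∑ i ∈ m.support, m i • (p ^ i.1 - 1)) = d := hd
    rw [← this]
    have hC : ((algebraMap K (DualSteenrod K)) (MvPolynomial.coeff m f)).IsWeightedHomogeneous
        (fun k : {k : ℕ // 0 < k} => (p ^ ν) ^ k.1 - 1) 0 :=
      MvPolynomial.isWeightedHomogeneous_C _ _
    have := hC.mul (MvPolynomial.IsWeightedHomogeneous.prod m.support
      (fun i : {k : ℕ // 0 < k} => (if h : ν ∣ i.1 then (MvPolynomial.X (R := K)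
        ⟨i.1 / ν, Nat.div_pos (Nat.le_of_dvd i.2 h) hν⟩) else 0) ^ m i)
      (fun i => m i • (p ^ i.1 - 1)) ?_)
    · simpa using this
    · intro i hi
      have hmi : m i ≠ 0 := Finsupp.mem_support_iff.mp hi
      by_cases h : ν ∣ i.1
      · have hX : (MvPolynomial.X (R := K)
            ⟨i.1 / ν, Nat.div_pos (Nat.le_of_dvd i.2 h) hν⟩).IsWeightedHomogeneous
            (fun k : {k : ℕ // 0 < k} => (p ^ ν) ^ k.1 - 1) (p ^ i.1 - 1) := by
          have : (p ^ ν) ^ (i.1 / ν) = p ^ i.1 := by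
            rw [← pow_mul, Nat.mul_div_cancel' h]
          simpa [this] using MvPolynomial.isWeightedHomogeneous_X K
            (fun k : {k : ℕ // 0 < k} => (p ^ ν) ^ k.1 - 1)
            ⟨i.1 / ν, Nat.div_pos (Nat.le_of_dvd i.2 h) hν⟩
        simp only [dif_pos h]
        simpa [smul_eq_mul] using pow_wh hX (m i)
      · simp only [dif_neg h, zero_pow hmi]
        exact MvPolynomial.isWeightedHomogeneous_zero _ _ _
end
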